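/- Let n ≥ 1 be an integer, Z_n = {v ∈ V_n : v0 = 0} and M_n = {v ∈ V_n : v2 ≥ n}. For u, v ∈ V_n, there exists a valid rectangular pattern over T'_n whose bottom label word is τ_n(v) and whose left label word is τ_n(u) if and only if (u,v) ∈ ((V_n ∖ Z_n) × (V_n ∖ Z_n)) ∪ ((M_n ∩ Z_n) × (M_n ∩ Z_n)) ∪ ((M_n ∖ Z_n) × Z_n) ∪ (Z_n × (M_n ∖ Z_n)). -/
import Mathlib


structure WangTile (C : Type*) where
  right : C
  top : C
  left : C
  bottom : C
deriving DecidableEq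

abbrev Lbl : Type := ℤ × ℤ × ℤ

def Vn (n : ℤ) : Set Lbl :=
  {v | 0 ≤ v.1 ∧ v.1 ≤ v.2.1 ∧ v.2.1 ≤ 1 ∧ v.2.1 ≤ v.2.2 ∧ v.2.2 ≤ n + 1}

def hatT {C : Type*} (t : WangTile C) : WangTile C :=
  ⟨t.top, t.right, t.bottom, t.left⟩

def whiteTiles (n : ℤ) : Set (WangTile Lbl) :=
  {t | ∃ i j : ℤ, 1 ≤ i ∧ i ≤ n ∧ 1 ≤ j ∧ j ≤ n ∧
    t = ⟨(1, 1, i + 1), (1, 1, j + 1), (1, 1, i), (1, 1, j)⟩}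

def blueH (n : ℤ) : Set (WangTile Lbl) :=
  {t | ∃ i : ℤ, 0 ≤ i ∧ i ≤ n ∧ t = ⟨(0, 0, i + 1), (1, 1, 1), (0, 0, i), (1, 1, n)⟩}

def greenH (n : ℤ) : Set (WangTile Lbl) :=
  {t | ∃ i : ℤ, 0 ≤ i ∧ i ≤ n ∧ t = ⟨(0, 1, i + 1), (1, 1, 1), (0, 0, i), (1, 1, n + 1)⟩}

def yellowH (n : ℤ) : Set (WangTile Lbl) :=
  {t | ∃ i : ℤ, 1 ≤ i ∧ i ≤ n ∧ t = ⟨(0, 1, i + 1), (1, 1, 2), (0, 1, i), (1, 1, n + 1)⟩}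

def antiH (n : ℤ) : Set (WangTile Lbl) :=
  {t | ∃ i : ℤ, 1 ≤ i ∧ i ≤ n ∧ t = ⟨(0, 0, i + 1), (1, 1, 2), (0, 1, i), (1, 1, n)⟩}

def junctionTile (n k l r s : ℤ) : WangTile Lbl :=
  ⟨(0, k, l), (0, r, s), (0, s, r + n), (0, l, k + n)⟩

def jPairs : Set (ℤ × ℤ) := {(0, 0), (0, 1), (1, 1)}

def junctions (n : ℤ) : Set (WangTile Lbl) :=
  {t | ∃ k l r s : ℤ, (k, l) ∈ jPairs ∧ (r, s) ∈ jPairs ∧ t = junctionTile n k l r s}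

def Text (n : ℤ) : Set (WangTile Lbl) :=
  whiteTiles n ∪ blueH n ∪ greenH n ∪ yellowH n ∪ antiH n ∪
    hatT '' blueH n ∪ hatT '' greenH n ∪ hatT '' yellowH n ∪ hatT '' antiH n ∪ junctions n

def Dset (n : ℤ) : Set (WangTile Lbl) :=
  {(⟨(0, 0, n + 1), (1, 1, 1), (0, 0, n), (1, 1, n)⟩ : WangTile Lbl),
    hatT (⟨(0, 0, n + 1), (1, 1, 1), (0, 0, n), (1, 1, n)⟩ : WangTile Lbl),
    junctionTile n 0 0 1 1, junctionTile n 1 1 0 0}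

def Tmet (n : ℤ) : Set (WangTile Lbl) :=
  Text n \ (antiH n ∪ hatT '' antiH n ∪ Dset n)

def ValidConfig {C : Type*} (T : Set (WangTile C)) (x : ℤ × ℤ → WangTile C) : Prop :=
  (∀ m, x m ∈ T) ∧
    (∀ m : ℤ × ℤ, (x m).right = (x (m.1 + 1, m.2)).left) ∧
    (∀ m : ℤ × ℤ, (x m).top = (x (m.1, m.2 + 1)).bottom)

def ValidPattern {C : Type*} (T : Set (WangTile C)) (w h : ℕ) (p : ℕ → ℕ → WangTile C) : Prop :=
  (∀ i j, i < w → j < h → p i j ∈ T) ∧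
    (∀ i j, i + 1 < w → j < h → (p i j).right = (p (i + 1) j).left) ∧
    (∀ i j, i < w → j + 1 < h → (p i j).top = (p i (j + 1)).bottom)

def bottomWord {C : Type*} (w : ℕ) (p : ℕ → ℕ → WangTile C) : List C :=
  (List.range w).map fun i => (p i 0).bottom

def topWord {C : Type*} (w h : ℕ) (p : ℕ → ℕ → WangTile C) : List C :=
  (List.range w).map fun i => (p i (h - 1)).top

def leftWord {C : Type*} (h : ℕ) (p : ℕ → ℕ → WangTile C) : List C :=
  (List.range h).map fun j => (p 0 j).left

def rightWord {C : Type*} (w h : ℕ) (p : ℕ → ℕ → WangTile C) : List C :=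
  (List.range h).map fun j => (p (w - 1) j).right

def tau (n : ℤ) (v : Lbl) : List Lbl :=
  if v.1 = v.2.2 then
    (0, v.1 - v.2.1 + 1, n + 1) :: List.replicate (n - v.2.2).toNat (1, 1, n + 1)
  else
    (0, v.1 - v.2.1 + 1, n) ::
      (List.replicate (v.2.2 - v.1 - 1).toNat (1, 1, n) ++
        List.replicate (n + 1 - v.2.2).toNat (1, 1, n + 1))

def Zn (n : ℤ) : Set Lbl := {v | v ∈ Vn n ∧ v.1 = 0}

def Mn (n : ℤ) : Set Lbl := {v | v ∈ Vn n ∧ n ≤ v.2.2}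

namespace Stmt6Aux

def Cc (v : Lbl) (t : ℤ) : ℤ := if v.1 = v.2.2 ∨ v.2.2 - v.1 < t then 1 else 0

def Ii (v : Lbl) (t : ℤ) : ℤ := v.1 - v.2.1 + t

lemma Cc_nonneg (v : Lbl) (t : ℤ) : 0 ≤ Cc v t ∧ Cc v t ≤ 1 := by
  unfold Cc; split <;> omega

def rowTile (n : ℤ) (v : Lbl) (t : ℤ) : WangTile Lbl :=
  ⟨(0, Cc v (t+1), Ii v t + 1), (1, 1, Cc v t + 1), (0, Cc v t, Ii v t), (1, 1, n + Cc v (t+1))⟩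

lemma tau_length (n : ℤ) (hn : 1 ≤ n) (v : Lbl) (hv : v ∈ Vn n) :
    ((tau n v).length : ℤ) = n + 1 - v.1 := by
  obtain ⟨h1, h2, h3, h4, h5⟩ := hv
  unfold tau
  split <;> rename_i hxz
  · simp only [List.length_cons, List.length_replicate]
    push_cast; omega
  · have hlt : v.1 < v.2.2 := lt_of_le_of_ne (le_trans h2 h4) hxz
    simp only [List.length_cons, List.length_append, List.length_replicate]
    push_cast; omega

lemma tau_getElem (n : ℤ) (hn : 1 ≤ n) (v : Lbl) (hv : v ∈ Vn n) (t : ℕ)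
    (ht : t < (tau n v).length) :
    (tau n v)[t] = if t = 0 then ((0 : ℤ), Ii v 1, n + Cc v 1)
      else (1, 1, n + Cc v ((t : ℤ) + 1)) := by
  obtain ⟨h1, h2, h3, h4, h5⟩ := hv
  by_cases hxz : v.1 = v.2.2
  · have htau : tau n v = (0, v.1 - v.2.1 + 1, n + 1) ::
        List.replicate (n - v.2.2).toNat (1, 1, n + 1) := by
      unfold tau; rw [if_pos hxz]
    rw [List.getElem_of_eq htau]
    rw [htau] at ht
    match t with
    | 0 =>
      rw [List.getElem_cons_zero, if_pos rfl, Cc, if_pos (Or.inl hxz)]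
      rfl
    | Nat.succ s =>
      rw [List.getElem_cons_succ, List.getElem_replicate,
        if_neg (Nat.succ_ne_zero s), Cc, if_pos (Or.inl hxz)]
  · have hlt : v.1 < v.2.2 := lt_of_le_of_ne (le_trans h2 h4) hxz
    have htau : tau n v = (0, v.1 - v.2.1 + 1, n) ::
        (List.replicate (v.2.2 - v.1 - 1).toNat (1, 1, n) ++
          List.replicate (n + 1 - v.2.2).toNat (1, 1, n + 1)) := by
      unfold tau; rw [if_neg hxz]
    rw [List.getElem_of_eq htau]
    rw [htau] at ht
    match t with
    | 0 =>
      rw [List.getElem_cons_zero, if_pos rfl, Cc,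
        if_neg (by push_cast; omega : ¬(v.1 = v.2.2 ∨ v.2.2 - v.1 < 1)), Ii]
      norm_num
    | Nat.succ s =>
      simp only [List.length_cons, List.length_append, List.length_replicate] at ht
      rw [List.getElem_cons_succ, List.getElem_append, if_neg (Nat.succ_ne_zero s)]
      split <;> rename_i hs
      · simp only [List.length_replicate] at hs
        rw [List.getElem_replicate, Cc, if_neg (by push_cast; omega)]
        norm_num
      · simp only [List.length_replicate] at hs
        rw [List.getElem_replicate, Cc, if_pos (by push_cast; omega)]

lemma tau_ne_nil (n : ℤ) (v : Lbl) : tau n v ≠ [] := by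
  unfold tau; split <;> simp

end Stmt6Aux
namespace Stmt6Aux

lemma mem_Text_iff (n : ℤ) (t : WangTile Lbl) :
    t ∈ Text n ↔ t ∈ whiteTiles n ∨ t ∈ blueH n ∨ t ∈ greenH n ∨ t ∈ yellowH n ∨
      t ∈ antiH n ∨ t ∈ hatT '' blueH n ∨ t ∈ hatT '' greenH n ∨ t ∈ hatT '' yellowH n ∨
      t ∈ hatT '' antiH n ∨ t ∈ junctions n := by
  simp only [Text, Set.mem_union]
  tauto

/-- classification: both bottom and left have first coordinate 0 ⟹ junction -/
lemma cl_junction (n : ℤ) {t : WangTile Lbl} (ht : t ∈ Text n)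
    (hb : t.bottom.1 = 0) (hl : t.left.1 = 0) :
    t.right = (0, t.bottom.2.2 - n, t.bottom.2.1) ∧
    t.top = (0, t.left.2.2 - n, t.left.2.1) := by
  rw [mem_Text_iff] at ht
  rcases ht with h | h | h | h | h | h | h | h | h | h
  · obtain ⟨i, j, _, _, _, _, rfl⟩ := h; simp at hb
  · obtain ⟨i, _, _, rfl⟩ := h; simp at hb
  · obtain ⟨i, _, _, rfl⟩ := h; simp at hb
  · obtain ⟨i, _, _, rfl⟩ := h; simp at hb
  · obtain ⟨i, _, _, rfl⟩ := h; simp at hb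
  · obtain ⟨s, ⟨i, _, _, rfl⟩, rfl⟩ := h; simp [hatT] at hl
  · obtain ⟨s, ⟨i, _, _, rfl⟩, rfl⟩ := h; simp [hatT] at hl
  · obtain ⟨s, ⟨i, _, _, rfl⟩, rfl⟩ := h; simp [hatT] at hl
  · obtain ⟨s, ⟨i, _, _, rfl⟩, rfl⟩ := h; simp [hatT] at hl
  · obtain ⟨k, l, r, s, _, _, rfl⟩ := h
    simp [junctionTile]

/-- classification: left (0,·,·), bottom (1,1,·) ⟹ horizontal tile with forced top/right -/
lemma cl_horiz (n : ℤ) {t : WangTile Lbl} (ht : t ∈ Text n)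
    (hl : t.left.1 = 0) (hb1 : t.bottom.1 = 1) (hb2 : t.bottom.2.1 = 1) :
    t.top = (1, 1, t.left.2.1 + 1) ∧ t.right = (0, t.bottom.2.2 - n, t.left.2.2 + 1) := by
  rw [mem_Text_iff] at ht
  rcases ht with h | h | h | h | h | h | h | h | h | h
  · obtain ⟨i, j, _, _, _, _, rfl⟩ := h; simp at hl
  · obtain ⟨i, _, _, rfl⟩ := h
    refine ⟨rfl, ?_⟩
    simp only [WangTile.right, WangTile.bottom, WangTile.left, Prod.mk.injEq]
    refine ⟨trivial, by omega, trivial⟩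
  · obtain ⟨i, _, _, rfl⟩ := h
    refine ⟨rfl, ?_⟩
    simp only [WangTile.right, WangTile.bottom, WangTile.left, Prod.mk.injEq]
    refine ⟨trivial, by omega, trivial⟩
  · obtain ⟨i, _, _, rfl⟩ := h
    refine ⟨rfl, ?_⟩
    simp only [WangTile.right, WangTile.bottom, WangTile.left, Prod.mk.injEq]
    refine ⟨trivial, by omega, trivial⟩
  · obtain ⟨i, _, _, rfl⟩ := h
    refine ⟨rfl, ?_⟩
    simp only [WangTile.right, WangTile.bottom, WangTile.left, Prod.mk.injEq]
    refine ⟨trivial, by omega, trivial⟩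
  · obtain ⟨s, ⟨i, _, _, rfl⟩, rfl⟩ := h; simp [hatT] at hb1
  · obtain ⟨s, ⟨i, _, _, rfl⟩, rfl⟩ := h; simp [hatT] at hb1
  · obtain ⟨s, ⟨i, _, _, rfl⟩, rfl⟩ := h; simp [hatT] at hb1
  · obtain ⟨s, ⟨i, _, _, rfl⟩, rfl⟩ := h; simp [hatT] at hb1
  · obtain ⟨k, l, r, s, _, _, rfl⟩ := h; simp [junctionTile] at hb1

/-- classification: bottom (0,·,·), left (1,1,·) ⟹ vertical tile with forced top/right -/
lemma cl_vert (n : ℤ) {t : WangTile Lbl} (ht : t ∈ Text n)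
    (hb : t.bottom.1 = 0) (hl1 : t.left.1 = 1) (hl2 : t.left.2.1 = 1) :
    t.right = (1, 1, t.bottom.2.1 + 1) ∧ t.top = (0, t.left.2.2 - n, t.bottom.2.2 + 1) := by
  rw [mem_Text_iff] at ht
  rcases ht with h | h | h | h | h | h | h | h | h | h
  · obtain ⟨i, j, _, _, _, _, rfl⟩ := h; simp at hb
  · obtain ⟨i, _, _, rfl⟩ := h; simp at hb
  · obtain ⟨i, _, _, rfl⟩ := h; simp at hb
  · obtain ⟨i, _, _, rfl⟩ := h; simp at hb
  · obtain ⟨i, _, _, rfl⟩ := h; simp at hb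
  · obtain ⟨s, ⟨i, _, _, rfl⟩, rfl⟩ := h
    refine ⟨rfl, ?_⟩
    simp only [hatT, WangTile.top, WangTile.bottom, WangTile.left, WangTile.right,
      Prod.mk.injEq]
    refine ⟨trivial, by omega, trivial⟩
  · obtain ⟨s, ⟨i, _, _, rfl⟩, rfl⟩ := h
    refine ⟨rfl, ?_⟩
    simp only [hatT, WangTile.top, WangTile.bottom, WangTile.left, WangTile.right,
      Prod.mk.injEq]
    refine ⟨trivial, by omega, trivial⟩
  · obtain ⟨s, ⟨i, _, _, rfl⟩, rfl⟩ := h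
    refine ⟨rfl, ?_⟩
    simp only [hatT, WangTile.top, WangTile.bottom, WangTile.left, WangTile.right,
      Prod.mk.injEq]
    refine ⟨trivial, by omega, trivial⟩
  · obtain ⟨s, ⟨i, _, _, rfl⟩, rfl⟩ := h
    refine ⟨rfl, ?_⟩
    simp only [hatT, WangTile.top, WangTile.bottom, WangTile.left, WangTile.right,
      Prod.mk.injEq]
    refine ⟨trivial, by omega, trivial⟩
  · obtain ⟨k, l, r, s, _, _, rfl⟩ := h; simp [junctionTile] at hl1

/-- classification: left (1,1,·), bottom (1,1,·) ⟹ white tile -/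
lemma cl_white (n : ℤ) {t : WangTile Lbl} (ht : t ∈ Text n)
    (hl1 : t.left.1 = 1) (hl2 : t.left.2.1 = 1)
    (hb1 : t.bottom.1 = 1) (hb2 : t.bottom.2.1 = 1) :
    t.top = (1, 1, t.bottom.2.2 + 1) ∧ t.right = (1, 1, t.left.2.2 + 1) ∧
    1 ≤ t.left.2.2 ∧ t.left.2.2 ≤ n ∧ 1 ≤ t.bottom.2.2 ∧ t.bottom.2.2 ≤ n := by
  rw [mem_Text_iff] at ht
  rcases ht with h | h | h | h | h | h | h | h | h | h
  · obtain ⟨i, j, hi1, hi2, hj1, hj2, rfl⟩ := h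
    exact ⟨rfl, rfl, hi1, hi2, hj1, hj2⟩
  · obtain ⟨i, _, _, rfl⟩ := h; simp at hl1
  · obtain ⟨i, _, _, rfl⟩ := h; simp at hl1
  · obtain ⟨i, _, _, rfl⟩ := h; simp at hl1
  · obtain ⟨i, _, _, rfl⟩ := h; simp at hl1
  · obtain ⟨s, ⟨i, _, _, rfl⟩, rfl⟩ := h; simp [hatT] at hb1
  · obtain ⟨s, ⟨i, _, _, rfl⟩, rfl⟩ := h; simp [hatT] at hb1
  · obtain ⟨s, ⟨i, _, _, rfl⟩, rfl⟩ := h; simp [hatT] at hb1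
  · obtain ⟨s, ⟨i, _, _, rfl⟩, rfl⟩ := h; simp [hatT] at hb1
  · obtain ⟨k, l, r, s, _, _, rfl⟩ := h; simp [junctionTile] at hl1

end Stmt6Aux
namespace Stmt6Aux

lemma rowTile_mem' (n : ℤ) (hn : 1 ≤ n) (v : Lbl) (hv : v ∈ Vn n) (t : ℤ)
    (ht1 : 1 ≤ t) (ht2 : t ≤ n - v.1) :
    rowTile n v t ∈ blueH n ∨ rowTile n v t ∈ greenH n ∨ rowTile n v t ∈ yellowH n := by
  obtain ⟨h1, h2, h3, h4, h5⟩ := hv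
  unfold rowTile
  by_cases hxz : v.1 = v.2.2
  · have hy : v.2.1 = v.1 := le_antisymm (by omega) h2
    rw [Cc, if_pos (Or.inl hxz), Cc, if_pos (Or.inl hxz)]
    refine .inr (.inr ⟨Ii v t, ?_, ?_, ?_⟩)
    · unfold Ii; omega
    · unfold Ii; omega
    · simp only [WangTile.mk.injEq, Prod.mk.injEq, Ii]
      norm_num
  · have hlt : v.1 < v.2.2 := lt_of_le_of_ne (le_trans h2 h4) hxz
    rcases lt_trichotomy t (v.2.2 - v.1) with hc | hc | hc
    · rw [Cc, if_neg (by omega), Cc, if_neg (by omega)]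
      refine .inl ⟨Ii v t, ?_, ?_, ?_⟩
      · unfold Ii; omega
      · unfold Ii; omega
      · simp only [WangTile.mk.injEq, Prod.mk.injEq, Ii]
        norm_num
    · rw [Cc, if_pos (by omega), Cc, if_neg (by omega)]
      refine .inr (.inl ⟨Ii v t, ?_, ?_, ?_⟩)
      · unfold Ii; omega
      · unfold Ii; omega
      · simp only [WangTile.mk.injEq, Prod.mk.injEq, Ii]
        norm_num
    · rw [Cc, if_pos (by omega), Cc, if_pos (by omega)]
      refine .inr (.inr ⟨Ii v t, ?_, ?_, ?_⟩)
      · unfold Ii; omega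
      · unfold Ii; omega
      · simp only [WangTile.mk.injEq, Prod.mk.injEq, Ii]
        norm_num

lemma rowTile_mem_Text (n : ℤ) (hn : 1 ≤ n) (v : Lbl) (hv : v ∈ Vn n) (t : ℤ)
    (ht1 : 1 ≤ t) (ht2 : t ≤ n - v.1) : rowTile n v t ∈ Text n := by
  rw [mem_Text_iff]
  rcases rowTile_mem' n hn v hv t ht1 ht2 with h | h | h <;> tauto

lemma hat_rowTile_mem_Text (n : ℤ) (hn : 1 ≤ n) (v : Lbl) (hv : v ∈ Vn n) (t : ℤ)
    (ht1 : 1 ≤ t) (ht2 : t ≤ n - v.1) : hatT (rowTile n v t) ∈ Text n := by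
  rw [mem_Text_iff]
  rcases rowTile_mem' n hn v hv t ht1 ht2 with h | h | h
  · exact .inr (.inr (.inr (.inr (.inr (.inl ⟨_, h, rfl⟩)))))
  · exact .inr (.inr (.inr (.inr (.inr (.inr (.inl ⟨_, h, rfl⟩))))))
  · exact .inr (.inr (.inr (.inr (.inr (.inr (.inr (.inl ⟨_, h, rfl⟩)))))))

lemma pair_mem_jPairs (n : ℤ) (hn : 1 ≤ n) (v : Lbl) (hv : v ∈ Vn n) :
    (Cc v 1, Ii v 1) ∈ jPairs := by
  obtain ⟨h1, h2, h3, h4, h5⟩ := hv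
  simp only [jPairs, Set.mem_insert_iff, Set.mem_singleton_iff, Prod.mk.injEq, Cc, Ii]
  split <;> rename_i hc <;> omega

lemma junction_mem_Text (n : ℤ) (hn : 1 ≤ n) (u v : Lbl) (hu : u ∈ Vn n) (hv : v ∈ Vn n) :
    junctionTile n (Cc v 1) (Ii v 1) (Cc u 1) (Ii u 1) ∈ Text n := by
  rw [mem_Text_iff]
  exact .inr (.inr (.inr (.inr (.inr (.inr (.inr (.inr (.inr
    ⟨_, _, _, _, pair_mem_jPairs n hn v hv, pair_mem_jPairs n hn u hu, rfl⟩))))))))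

def patt (n : ℤ) (u v : Lbl) : ℕ → ℕ → WangTile Lbl
  | 0, 0 => junctionTile n (Cc v 1) (Ii v 1) (Cc u 1) (Ii u 1)
  | (i+1), 0 => rowTile n v ((i : ℤ) + 1)
  | 0, (j+1) => hatT (rowTile n u ((j : ℤ) + 1))
  | (i+1), (j+1) =>
      ⟨(1, 1, Cc u ((j : ℤ)+1) + ((i : ℤ)+1) + 1), (1, 1, Cc v ((i : ℤ)+1) + ((j : ℤ)+1) + 1),
        (1, 1, Cc u ((j : ℤ)+1) + ((i : ℤ)+1)), (1, 1, Cc v ((i : ℤ)+1) + ((j : ℤ)+1))⟩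

lemma construction (n : ℤ) (hn : 1 ≤ n) (u v : Lbl) (hu : u ∈ Vn n) (hv : v ∈ Vn n)
    (hb1 : ∀ j i : ℤ, 1 ≤ j → j ≤ n - u.1 → 1 ≤ i → i ≤ n - v.1 → Cc u j + i ≤ n)
    (hb2 : ∀ i j : ℤ, 1 ≤ i → i ≤ n - v.1 → 1 ≤ j → j ≤ n - u.1 → Cc v i + j ≤ n) :
    ValidPattern (Text n) (tau n v).length (tau n u).length (patt n u v) ∧
    bottomWord (tau n v).length (patt n u v) = tau n v ∧
    leftWord (tau n u).length (patt n u v) = tau n u := by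
  have hw : ((tau n v).length : ℤ) = n + 1 - v.1 := tau_length n hn v hv
  have hh : ((tau n u).length : ℤ) = n + 1 - u.1 := tau_length n hn u hu
  obtain ⟨hv1, hv2, hv3, hv4, hv5⟩ := hv
  obtain ⟨hu1, hu2, hu3, hu4, hu5⟩ := hu
  refine ⟨⟨?_, ?_, ?_⟩, ?_, ?_⟩
  · -- membership
    rintro (_ | i) (_ | j) hi hj
    · exact junction_mem_Text n hn u v ⟨hu1, hu2, hu3, hu4, hu5⟩ ⟨hv1, hv2, hv3, hv4, hv5⟩
    · exact hat_rowTile_mem_Text n hn u ⟨hu1, hu2, hu3, hu4, hu5⟩ _ (by omega) (by omega)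
    · exact rowTile_mem_Text n hn v ⟨hv1, hv2, hv3, hv4, hv5⟩ _ (by omega) (by omega)
    · rw [mem_Text_iff]
      refine .inl ⟨Cc u ((j : ℤ)+1) + ((i : ℤ)+1), Cc v ((i : ℤ)+1) + ((j : ℤ)+1),
        ?_, ?_, ?_, ?_, rfl⟩
      · have := Cc_nonneg u ((j : ℤ)+1); omega
      · exact hb1 _ _ (by omega) (by omega) (by omega) (by omega)
      · have := Cc_nonneg v ((i : ℤ)+1); omega
      · exact hb2 _ _ (by omega) (by omega) (by omega) (by omega)
  · -- horizontal matching
    rintro (_ | i) (_ | j) hi hj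
    · show (junctionTile n (Cc v 1) (Ii v 1) (Cc u 1) (Ii u 1)).right = (rowTile n v _).left
      simp only [junctionTile, rowTile]
      norm_num
    · show (hatT (rowTile n u _)).right = _
      simp only [patt, hatT, rowTile]
      norm_num
    · show (rowTile n v _).right = (rowTile n v _).left
      simp only [rowTile, Ii]
      push_cast
      simp only [Prod.mk.injEq]
      first
        | (and_intros <;> first | trivial | omega)
        | omega
        | trivial
    · simp only [patt]
      push_cast
      simp only [Prod.mk.injEq]
      first
        | (and_intros <;> first | trivial | omega)
        | omega
        | trivial
  · -- vertical matching
    rintro (_ | i) (_ | j) hi hj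
    · show (junctionTile n (Cc v 1) (Ii v 1) (Cc u 1) (Ii u 1)).top = (hatT (rowTile n u _)).bottom
      simp only [junctionTile, hatT, rowTile]
      norm_num
    · show (hatT (rowTile n u _)).top = (hatT (rowTile n u _)).bottom
      simp only [hatT, rowTile, Ii]
      push_cast
      simp only [Prod.mk.injEq]
      first
        | (and_intros <;> first | trivial | omega)
        | omega
        | trivial
    · show (rowTile n v _).top = _
      simp only [patt, rowTile]
      norm_num
    · simp only [patt]
      push_cast
      simp only [Prod.mk.injEq]
      first
        | (and_intros <;> first | trivial | omega)
        | omega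
        | trivial
  · -- bottom word
    apply List.ext_getElem
    · simp [bottomWord]
    · intro t h1 h2
      have hlen : t < (tau n v).length := by simpa [bottomWord] using h1
      rw [tau_getElem n hn v ⟨hv1, hv2, hv3, hv4, hv5⟩ t hlen]
      simp only [bottomWord, List.getElem_map, List.getElem_range]
      match t with
      | 0 =>
        show (junctionTile n (Cc v 1) (Ii v 1) (Cc u 1) (Ii u 1)).bottom = _
        try simp only [junctionTile, if_pos rfl, eq_self_iff_true, ite_true]
        try simp only [Prod.mk.injEq]
        first
        | (and_intros <;> first | trivial | omega)
        | omega
        | trivial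
      | Nat.succ s =>
        show (rowTile n v _).bottom = _
        rw [if_neg (Nat.succ_ne_zero s)]
        simp only [rowTile]
        push_cast
        norm_num
  · -- left word
    apply List.ext_getElem
    · simp [leftWord]
    · intro t h1 h2
      have hlen : t < (tau n u).length := by simpa [leftWord] using h1
      rw [tau_getElem n hn u ⟨hu1, hu2, hu3, hu4, hu5⟩ t hlen]
      simp only [leftWord, List.getElem_map, List.getElem_range]
      match t with
      | 0 =>
        show (junctionTile n (Cc v 1) (Ii v 1) (Cc u 1) (Ii u 1)).left = _
        try simp only [junctionTile, if_pos rfl, eq_self_iff_true, ite_true]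
        try simp only [Prod.mk.injEq]
        first
        | (and_intros <;> first | trivial | omega)
        | omega
        | trivial
      | Nat.succ s =>
        show (hatT (rowTile n u _)).left = _
        rw [if_neg (Nat.succ_ne_zero s)]
        simp only [hatT, rowTile]
        push_cast
        norm_num

end Stmt6Aux
namespace Stmt6Aux

lemma fwd (n : ℤ) (hn : 1 ≤ n) (u v : Lbl) (hu : u ∈ Vn n) (hv : v ∈ Vn n)
    (w h : ℕ) (p : ℕ → ℕ → WangTile Lbl)
    (hvp : ValidPattern (Text n) w h p)
    (hbw : bottomWord w p = tau n v) (hlw : leftWord h p = tau n u)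
    (hu0 : u.1 = 0) (hw2 : 2 ≤ w) (hh2 : 2 ≤ h) :
    v.1 ≠ v.2.2 ∧ n ≤ v.2.2 := by
  obtain ⟨hmem, hhm, hvm⟩ := hvp
  have hwl : w = (tau n v).length := by
    have := congrArg List.length hbw
    simpa [bottomWord] using this
  have hhl : h = (tau n u).length := by
    have := congrArg List.length hlw
    simpa [leftWord] using this
  have hwz : (w : ℤ) = n + 1 - v.1 := by rw [hwl]; exact tau_length n hn v hv
  have hhz : (h : ℤ) = n + 1 - u.1 := by rw [hhl]; exact tau_length n hn u hu
  have hgetb : ∀ t : ℕ, t < w → (p t 0).bottom =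
      (if t = 0 then ((0 : ℤ), Ii v 1, n + Cc v 1) else (1, 1, n + Cc v ((t : ℤ) + 1))) := by
    intro t ht
    have h2 : t < (tau n v).length := hwl ▸ ht
    have e1 : (bottomWord w p)[t]'(by simpa [bottomWord] using ht) = (tau n v)[t]'h2 :=
      List.getElem_of_eq hbw _
    rw [← tau_getElem n hn v hv t h2, ← e1]
    simp [bottomWord]
  have hgetl : ∀ t : ℕ, t < h → (p 0 t).left =
      (if t = 0 then ((0 : ℤ), Ii u 1, n + Cc u 1) else (1, 1, n + Cc u ((t : ℤ) + 1))) := by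
    intro t ht
    have h2 : t < (tau n u).length := hhl ▸ ht
    have e1 : (leftWord h p)[t]'(by simpa [leftWord] using ht) = (tau n u)[t]'h2 :=
      List.getElem_of_eq hlw _
    rw [← tau_getElem n hn u hu t h2, ← e1]
    simp [leftWord]
  have hb0 : (p 0 0).bottom = (0, Ii v 1, n + Cc v 1) := by simpa using hgetb 0 (by omega)
  have hl0 : (p 0 0).left = (0, Ii u 1, n + Cc u 1) := by simpa using hgetl 0 (by omega)
  obtain ⟨hr0, ht0⟩ := cl_junction n (hmem 0 0 (by omega) (by omega))
    (by rw [hb0]) (by rw [hl0])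
  have hr0' : (p 0 0).right = (0, Cc v 1, Ii v 1) := by
    rw [hr0, hb0]
    simp only [Prod.mk.injEq]
    and_intros <;> first | trivial | omega
  have ht0' : (p 0 0).top = (0, Cc u 1, Ii u 1) := by
    rw [ht0, hl0]
    simp only [Prod.mk.injEq]
    and_intros <;> first | trivial | omega
  -- the bottom row is forced
  have hrow : ∀ t : ℕ, 1 ≤ t → t < w →
      (p t 0).left = (0, Cc v (t : ℤ), Ii v (t : ℤ)) ∧
      (p t 0).top = (1, 1, Cc v (t : ℤ) + 1) ∧
      (p t 0).right = (0, Cc v ((t : ℤ) + 1), Ii v ((t : ℤ) + 1)) := by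
    have step : ∀ t : ℕ, 1 ≤ t → t < w →
        (p t 0).left = (0, Cc v (t : ℤ), Ii v (t : ℤ)) →
        (p t 0).top = (1, 1, Cc v (t : ℤ) + 1) ∧
        (p t 0).right = (0, Cc v ((t : ℤ) + 1), Ii v ((t : ℤ) + 1)) := by
      intro t ht1 ht2 hl
      have hbt : (p t 0).bottom = (1, 1, n + Cc v ((t : ℤ) + 1)) := by
        rw [hgetb t ht2, if_neg (by omega)]
      obtain ⟨htp, hrt⟩ := cl_horiz n (hmem t 0 ht2 (by omega))
        (by rw [hl]) (by rw [hbt]) (by rw [hbt])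
      constructor
      · rw [htp, hl]
      · rw [hrt, hbt, hl]
        simp only [Prod.mk.injEq, Ii]
        and_intros <;> first | trivial | omega
    intro t ht1
    induction t, ht1 using Nat.le_induction with
    | base =>
      intro ht2
      have hl : (p 1 0).left = (0, Cc v 1, Ii v 1) := by
        rw [← hhm 0 0 (by omega) (by omega), hr0']
      have hl' : (p 1 0).left = (0, Cc v ((1 : ℕ) : ℤ), Ii v ((1 : ℕ) : ℤ)) := by
        rw [hl]; norm_num
      exact ⟨hl', step 1 le_rfl ht2 hl'⟩
    | succ t ht ih =>
      intro ht2
      obtain ⟨_, _, hr⟩ := ih (by omega)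
      have hl : (p (t + 1) 0).left = (0, Cc v ((t : ℤ) + 1), Ii v ((t : ℤ) + 1)) := by
        rw [← hhm t 0 (by omega) (by omega), hr]
      have hl' : (p (t + 1) 0).left = (0, Cc v (((t + 1 : ℕ)) : ℤ), Ii v (((t + 1 : ℕ)) : ℤ)) := by
        rw [hl]; push_cast; ring_nf
      refine ⟨hl', ?_, ?_⟩
      · have := (step (t + 1) (by omega) ht2 hl').1
        rw [this]
      · have := (step (t + 1) (by omega) ht2 hl').2
        rw [this]
  -- the left column is forced
  have hcol : ∀ j : ℕ, 1 ≤ j → j < h →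
      (p 0 j).bottom = (0, Cc u (j : ℤ), Ii u (j : ℤ)) ∧
      (p 0 j).right = (1, 1, Cc u (j : ℤ) + 1) ∧
      (p 0 j).top = (0, Cc u ((j : ℤ) + 1), Ii u ((j : ℤ) + 1)) := by
    have step : ∀ j : ℕ, 1 ≤ j → j < h →
        (p 0 j).bottom = (0, Cc u (j : ℤ), Ii u (j : ℤ)) →
        (p 0 j).right = (1, 1, Cc u (j : ℤ) + 1) ∧
        (p 0 j).top = (0, Cc u ((j : ℤ) + 1), Ii u ((j : ℤ) + 1)) := by
      intro j hj1 hj2 hb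
      have hlf : (p 0 j).left = (1, 1, n + Cc u ((j : ℤ) + 1)) := by
        rw [hgetl j hj2, if_neg (by omega)]
      obtain ⟨hrt, htp⟩ := cl_vert n (hmem 0 j (by omega) hj2)
        (by rw [hb]) (by rw [hlf]) (by rw [hlf])
      constructor
      · rw [hrt, hb]
      · rw [htp, hb, hlf]
        simp only [Prod.mk.injEq, Ii]
        and_intros <;> first | trivial | omega
    intro j hj1
    induction j, hj1 using Nat.le_induction with
    | base =>
      intro hj2
      have hb : (p 0 1).bottom = (0, Cc u ((1 : ℕ) : ℤ), Ii u ((1 : ℕ) : ℤ)) := by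
        rw [← hvm 0 0 (by omega) (by omega), ht0']; norm_num
      exact ⟨hb, step 1 le_rfl hj2 hb⟩
    | succ j hj ih =>
      intro hj2
      obtain ⟨_, _, htp⟩ := ih (by omega)
      have hb : (p 0 (j + 1)).bottom = (0, Cc u (((j + 1 : ℕ)) : ℤ), Ii u (((j + 1 : ℕ)) : ℤ)) := by
        rw [← hvm 0 j (by omega) (by omega), htp]; push_cast; ring_nf
      exact ⟨hb, step (j + 1) (by omega) hj2 hb⟩
  -- the interior is forced (white tiles)
  have hwhiterow : ∀ j : ℕ, 1 ≤ j → j < h →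
      (∀ i : ℕ, 1 ≤ i → i < w → (p i j).bottom = (1, 1, Cc v (i : ℤ) + (j : ℤ))) →
      ∀ i : ℕ, 1 ≤ i → i < w →
        (p i j).top = (1, 1, Cc v (i : ℤ) + (j : ℤ) + 1) ∧
        (p i j).right = (1, 1, Cc u (j : ℤ) + (i : ℤ) + 1) ∧
        Cc v (i : ℤ) + (j : ℤ) ≤ n := by
    intro j hj1 hj2 hbj
    have step : ∀ i : ℕ, 1 ≤ i → i < w →
        (p i j).left = (1, 1, Cc u (j : ℤ) + (i : ℤ)) →
        (p i j).top = (1, 1, Cc v (i : ℤ) + (j : ℤ) + 1) ∧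
        (p i j).right = (1, 1, Cc u (j : ℤ) + (i : ℤ) + 1) ∧
        Cc v (i : ℤ) + (j : ℤ) ≤ n := by
      intro i hi1 hi2 hl
      have hb := hbj i hi1 hi2
      obtain ⟨htp, hrt, _, hb2, _, hb4⟩ := cl_white n (hmem i j hi2 hj2)
        (by rw [hl]) (by rw [hl]) (by rw [hb]) (by rw [hb])
      refine ⟨?_, ?_, ?_⟩
      · rw [htp, hb]
      · rw [hrt, hl]
      · rw [hb] at hb4; exact hb4
    intro i hi1
    induction i, hi1 using Nat.le_induction with
    | base =>
      intro hi2
      have hl : (p 1 j).left = (1, 1, Cc u (j : ℤ) + ((1 : ℕ) : ℤ)) := by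
        rw [← hhm 0 j (by omega) hj2, (hcol j hj1 hj2).2.1]; norm_num
      exact step 1 le_rfl hi2 hl
    | succ i hi ih =>
      intro hi2
      have hr := (ih (by omega)).2.1
      have hl : (p (i + 1) j).left = (1, 1, Cc u (j : ℤ) + ((i + 1 : ℕ) : ℤ)) := by
        rw [← hhm i j (by omega) hj2, hr]; push_cast; ring_nf
      exact step (i + 1) (by omega) hi2 hl
  have hbotrow : ∀ j : ℕ, 1 ≤ j → j < h → ∀ i : ℕ, 1 ≤ i → i < w →
      (p i j).bottom = (1, 1, Cc v (i : ℤ) + (j : ℤ)) := by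
    intro j hj1
    induction j, hj1 using Nat.le_induction with
    | base =>
      intro hj2 i hi1 hi2
      rw [← hvm i 0 hi2 (by omega), (hrow i hi1 hi2).2.1]; norm_num
    | succ j hj ih =>
      intro hj2 i hi1 hi2
      have htopj := (hwhiterow j hj (by omega) (ih (by omega)) i hi1 hi2).1
      rw [← hvm i j hi2 (by omega), htopj]; push_cast; ring_nf
  obtain ⟨hv1, hv2, hv3, hv4, hv5⟩ := hv
  by_contra hcon
  have hcon' : v.1 = v.2.2 ∨ v.2.2 < n := by
    rcases not_and_or.mp hcon with hc | hc
    · exact Or.inl (not_not.mp hc)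
    · exact Or.inr (not_le.mp hc)
  have hj1 : 1 ≤ h - 1 := by omega
  have hj2 : h - 1 < h := by omega
  have hjz : ((h - 1 : ℕ) : ℤ) = n := by omega
  obtain ⟨i, hi1, hi2, hCc⟩ : ∃ i : ℕ, 1 ≤ i ∧ i < w ∧ Cc v (i : ℤ) = 1 := by
    by_cases hxz : v.1 = v.2.2
    · refine ⟨1, le_rfl, by omega, ?_⟩
      rw [Cc, if_pos (Or.inl hxz)]
    · have hvlt : v.2.2 < n := by tauto
      have h13 : v.1 ≤ v.2.2 := le_trans hv2 hv4
      refine ⟨(v.2.2 - v.1 + 1).toNat, by omega, by omega, ?_⟩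
      rw [Cc, if_pos (Or.inr (by omega))]
  have hb := hwhiterow (h - 1) hj1 hj2 (hbotrow (h - 1) hj1 hj2) i hi1 hi2
  have hbound := hb.2.2
  rw [hCc, hjz] at hbound
  omega

end Stmt6Aux
namespace Stmt6Aux

lemma hatT_hatT {C : Type*} (t : WangTile C) : hatT (hatT t) = t := rfl

lemma hatT_mem_Text (n : ℤ) {t : WangTile Lbl} (ht : t ∈ Text n) : hatT t ∈ Text n := by
  rw [mem_Text_iff] at ht ⊢
  rcases ht with h | h | h | h | h | h | h | h | h | h
  · obtain ⟨i, j, h1, h2, h3, h4, rfl⟩ := h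
    exact .inl ⟨j, i, h3, h4, h1, h2, rfl⟩
  · exact .inr (.inr (.inr (.inr (.inr (.inl ⟨_, h, rfl⟩)))))
  · exact .inr (.inr (.inr (.inr (.inr (.inr (.inl ⟨_, h, rfl⟩))))))
  · exact .inr (.inr (.inr (.inr (.inr (.inr (.inr (.inl ⟨_, h, rfl⟩)))))))
  · exact .inr (.inr (.inr (.inr (.inr (.inr (.inr (.inr (.inl ⟨_, h, rfl⟩))))))))
  · obtain ⟨s, hs, rfl⟩ := h
    exact .inr (.inl (hatT_hatT s ▸ hs))
  · obtain ⟨s, hs, rfl⟩ := h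
    exact .inr (.inr (.inl (hatT_hatT s ▸ hs)))
  · obtain ⟨s, hs, rfl⟩ := h
    exact .inr (.inr (.inr (.inl (hatT_hatT s ▸ hs))))
  · obtain ⟨s, hs, rfl⟩ := h
    exact .inr (.inr (.inr (.inr (.inl (hatT_hatT s ▸ hs)))))
  · obtain ⟨k, l, r, s, h1, h2, rfl⟩ := h
    exact .inr (.inr (.inr (.inr (.inr (.inr (.inr (.inr (.inr ⟨r, s, k, l, h2, h1, rfl⟩))))))))

lemma transpose_valid (n : ℤ) (w h : ℕ) (p : ℕ → ℕ → WangTile Lbl)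
    (hvp : ValidPattern (Text n) w h p) :
    ValidPattern (Text n) h w (fun i j => hatT (p j i)) := by
  obtain ⟨hmem, hhm, hvm⟩ := hvp
  refine ⟨fun i j hi hj => hatT_mem_Text n (hmem j i hj hi), ?_, ?_⟩
  · intro i j hi hj
    show (p j i).top = (p j (i + 1)).bottom
    exact hvm j i hj hi
  · intro i j hi hj
    show (p j i).right = (p (j + 1) i).left
    exact hhm j i hj hi

end Stmt6Aux
/-- characterization of the pairs `(u,v)` for which a valid rectangular
pattern over `T'_n` with bottom word `τ_n(v)` and left word `τ_n(u)` exists. -/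
theorem stmt6 (n : ℤ) (hn : 1 ≤ n) (u v : Lbl) (hu : u ∈ Vn n) (hv : v ∈ Vn n) :
    (∃ (w h : ℕ) (p : ℕ → ℕ → WangTile Lbl),
      1 ≤ w ∧ 1 ≤ h ∧ ValidPattern (Text n) w h p ∧
      bottomWord w p = tau n v ∧ leftWord h p = tau n u) ↔
    (u, v) ∈ ((Vn n \ Zn n) ×ˢ (Vn n \ Zn n)) ∪ ((Mn n ∩ Zn n) ×ˢ (Mn n ∩ Zn n)) ∪
      ((Mn n \ Zn n) ×ˢ Zn n) ∪ (Zn n ×ˢ (Mn n \ Zn n)) := by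
  classical
  obtain ⟨hu1, hu2, hu3, hu4, hu5⟩ := id hu
  obtain ⟨hv1, hv2, hv3, hv4, hv5⟩ := id hv
  have hZu : u ∈ Zn n ↔ u.1 = 0 := by simp [Zn, hu]
  have hZv : v ∈ Zn n ↔ v.1 = 0 := by simp [Zn, hv]
  have hMu : u ∈ Mn n ↔ n ≤ u.2.2 := by simp [Mn, hu]
  have hMv : v ∈ Mn n ↔ n ≤ v.2.2 := by simp [Mn, hv]
  have hRHS : ((u, v) ∈ ((Vn n \ Zn n) ×ˢ (Vn n \ Zn n)) ∪ ((Mn n ∩ Zn n) ×ˢ (Mn n ∩ Zn n)) ∪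
      ((Mn n \ Zn n) ×ˢ Zn n) ∪ (Zn n ×ˢ (Mn n \ Zn n))) ↔
      ((u.1 = 1 ∧ v.1 = 1) ∨ (u.1 = 0 ∧ n ≤ u.2.2 ∧ v.1 = 0 ∧ n ≤ v.2.2) ∨
        (u.1 = 1 ∧ n ≤ u.2.2 ∧ v.1 = 0) ∨ (u.1 = 0 ∧ v.1 = 1 ∧ n ≤ v.2.2)) := by
    simp only [Set.mem_union, Set.mem_prod, Set.mem_diff, Set.mem_inter_iff,
      hZu, hZv, hMu, hMv, hu, hv, true_and, and_true]
    constructor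
    · rintro (((⟨ha, hb⟩ | ⟨⟨ha, hb⟩, hc, hd⟩) | ⟨⟨ha, hb⟩, hc⟩) | ⟨ha, hb, hc⟩) <;> omega
    · rintro (⟨ha, hb⟩ | ⟨ha, hb, hc, hd⟩ | ⟨ha, hb, hc⟩ | ⟨ha, hb, hc⟩)
      · exact Or.inl (Or.inl (Or.inl ⟨by omega, by omega⟩))
      · exact Or.inl (Or.inl (Or.inr ⟨⟨by omega, by omega⟩, by omega, by omega⟩))
      · exact Or.inl (Or.inr ⟨⟨by omega, by omega⟩, by omega⟩)
      · exact Or.inr ⟨by omega, by omega, by omega⟩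
  rw [hRHS]
  constructor
  · rintro ⟨w, h, p, hw1, hh1, hvp, hbw, hlw⟩
    have hwz : (w : ℤ) = n + 1 - v.1 := by
      have : w = (tau n v).length := by
        have := congrArg List.length hbw
        simpa [bottomWord] using this
      rw [this]; exact Stmt6Aux.tau_length n hn v hv
    have hhz : (h : ℤ) = n + 1 - u.1 := by
      have : h = (tau n u).length := by
        have := congrArg List.length hlw
        simpa [leftWord] using this
      rw [this]; exact Stmt6Aux.tau_length n hn u hu
    have P1 : u.1 = 0 → 2 ≤ w → 2 ≤ h → v.1 ≠ v.2.2 ∧ n ≤ v.2.2 := fun a b c =>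
      Stmt6Aux.fwd n hn u v hu hv w h p hvp hbw hlw a b c
    have hbq : bottomWord h (fun i j => hatT (p j i)) = tau n u := by
      rw [← hlw]; simp [bottomWord, leftWord, hatT]
    have hlq : leftWord w (fun i j => hatT (p j i)) = tau n v := by
      rw [← hbw]; simp [bottomWord, leftWord, hatT]
    have P2 : v.1 = 0 → 2 ≤ h → 2 ≤ w → u.1 ≠ u.2.2 ∧ n ≤ u.2.2 := fun a b c =>
      Stmt6Aux.fwd n hn v u hv hu h w _ (Stmt6Aux.transpose_valid n w h p hvp) hbq hlq a b c
    by_cases hu0 : u.1 = 0 <;> by_cases hv0 : v.1 = 0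
    · have hA := P1 hu0 (by omega) (by omega)
      have hB := P2 hv0 (by omega) (by omega)
      omega
    · by_cases hw' : 2 ≤ w
      · have hA := P1 hu0 hw' (by omega)
        omega
      · omega
    · by_cases hh' : 2 ≤ h
      · have hB := P2 hv0 hh' (by omega)
        omega
      · omega
    · omega
  · intro harith
    have hb1 : ∀ j i : ℤ, 1 ≤ j → j ≤ n - u.1 → 1 ≤ i → i ≤ n - v.1 →
        Stmt6Aux.Cc u j + i ≤ n := by
      intro j i h1 h2 h3 h4
      rw [Stmt6Aux.Cc]
      split <;> rename_i hcc <;> omega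
    have hb2 : ∀ i j : ℤ, 1 ≤ i → i ≤ n - v.1 → 1 ≤ j → j ≤ n - u.1 →
        Stmt6Aux.Cc v i + j ≤ n := by
      intro i j h1 h2 h3 h4
      rw [Stmt6Aux.Cc]
      split <;> rename_i hcc <;> omega
    obtain ⟨c1, c2, c3⟩ := Stmt6Aux.construction n hn u v hu hv hb1 hb2
    exact ⟨(tau n v).length, (tau n u).length, Stmt6Aux.patt n u v,
      List.length_pos_iff.mpr (Stmt6Aux.tau_ne_nil n v),
      List.length_pos_iff.mpr (Stmt6Aux.tau_ne_nil n u), c1, c2, c3⟩
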